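/- In the lattice Λ₃ with its intersection form (defined in the context), set L100 = L010 = L110 = f₁ + f₂ + f₃, L001 = 2f₂, L101 = l + f₃, L011 = 2f₁ + f₂ − e₃, L111 = f₁ + f₃, and A = f₁ + f₂ + f₃ = 3l − e₁ − e₂ − e₃. Then 2·(A·A) = 12, K + L100 = K + L010 = K + L110 = 0, and the sum over the seven characters Σ_χ L_χ·(L_χ + K) = −10 (so that the ℤ₂³-cover X → Y₃ with this building data satisfies K_X² = 12, p_g(X) = 3 and χ(O_X) = 8 + ½·(−10) = 3, hence q(X) = 1). -/
import Mathlib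


/-- The Picard lattice of the blow-up of the projective plane at 3 points:
free abelian group with basis `l, e1, ..., e3`. -/
abbrev Lam : Type := Fin 4 → ℤ

namespace DelPezzoCover

def l : Lam := ![1, 0, 0, 0]
def e1 : Lam := ![0, 1, 0, 0]
def e2 : Lam := ![0, 0, 1, 0]
def e3 : Lam := ![0, 0, 0, 1]

/-- The canonical class `K = -3l + e1 + ... + e3`. -/
def K : Lam := (-3 : ℤ) • l + e1 + e2 + e3

def f1 : Lam := l - e1
def f2 : Lam := l - e2
def f3 : Lam := l - e3

def h12 : Lam := l - e1 - e2
def h13 : Lam := l - e1 - e3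
def h23 : Lam := l - e2 - e3

/-- The intersection form: `l·l = 1`, `eᵢ·eᵢ = -1`, distinct basis vectors orthogonal. -/
def ip (x y : Lam) : ℤ := x 0 * y 0 - (x 1 * y 1 + x 2 * y 2 + x 3 * y 3)

def L100 : Lam := f1 + f2 + f3
def L010 : Lam := f1 + f2 + f3
def L001 : Lam := (2 : ℤ) • f2
def L110 : Lam := f1 + f2 + f3
def L101 : Lam := l + f3
def L011 : Lam := (2 : ℤ) • f1 + f2 - e3
def L111 : Lam := f1 + f3

def A : Lam := f1 + f2 + f3

theorem invariants_d12_q1 :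
    A = (3 : ℤ) • l - e1 - e2 - e3 ∧
    2 * ip A A = 12 ∧
    K + L100 = 0 ∧
    K + L010 = 0 ∧
    K + L110 = 0 ∧
    ip L100 (L100 + K) + ip L010 (L010 + K) + ip L001 (L001 + K) + ip L110 (L110 + K) + ip L101 (L101 + K) + ip L011 (L011 + K) + ip L111 (L111 + K) = -10 := by
  refine ⟨?_, ?_, ?_, ?_, ?_, ?_⟩ <;> first
  | (funext i; fin_cases i <;> simp [A, K, L100, L010, L110, l, e1, e2, e3, f1, f2, f3] <;> ring)
  | (simp [ip, A, K, L100, L010, L110, L001, L101, L011, L111, l, e1, e2, e3, f1, f2, f3] <;> ring)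

end DelPezzoCover
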